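/- Let d ≥ 2 and suppose λ_1 = λ_2 = ... = λ_{d-1} = (1−λ_0)/(d−1) with 1/d < λ_0 < d/(d²−2). Then γ_j = 0 for j ≥ 1 and p₁ = λ_0 γ_0 = d²(λ_0 − 1/d) / (d²(λ_0 − 1/d) + 2(1−λ_0)) ≤ d³/(2(d−1)) · (λ_0 − 1/d). -/

import Mathlib

/-- If all Schmidt squares except the largest are equal, λⱼ = (1−λ₀)/(d−1) for
j ≥ 1, with 1/d < λ₀ < d/(d²−2), then γⱼ = 0 for j ≥ 1 and
p₁ = λ₀γ₀ = d²(λ₀ − 1/d)/(d²(λ₀ − 1/d) + 2(1−λ₀)) ≤ (d³/(2(d−1)))(λ₀ − 1/d). -/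
theorem stmt_17 (d : ℕ) (hd : 2 ≤ d) (lam : Fin d → ℝ)
    (hpos : ∀ j, 0 < lam j)
    (heqtail : ∀ j : Fin d, 1 ≤ (j : ℕ) →
      lam j = (1 - lam ⟨0, by omega⟩) / ((d : ℝ) - 1))
    (hlow : 1 / (d : ℝ) < lam ⟨0, by omega⟩)
    (hhigh : lam ⟨0, by omega⟩ < (d : ℝ) / ((d : ℝ) ^ 2 - 2))
    (γ : Fin d → ℝ)
    (hγ : ∀ j, γ j = 1 - (lam ⟨d - 1, by omega⟩ / lam j)
      * (((d : ℝ) - ((d : ℝ) ^ 2 - 2) * lam j)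
        / ((d : ℝ) - ((d : ℝ) ^ 2 - 2) * lam ⟨d - 1, by omega⟩)))
    (p₁ : ℝ) (hp₁ : p₁ = ∑ j, lam j * γ j) :
    (∀ j : Fin d, 1 ≤ (j : ℕ) → γ j = 0) ∧
    p₁ = lam ⟨0, by omega⟩ * γ ⟨0, by omega⟩ ∧
    p₁ = (d : ℝ) ^ 2 * (lam ⟨0, by omega⟩ - 1 / d)
      / ((d : ℝ) ^ 2 * (lam ⟨0, by omega⟩ - 1 / d) + 2 * (1 - lam ⟨0, by omega⟩)) ∧
    p₁ ≤ (d : ℝ) ^ 3 / (2 * ((d : ℝ) - 1)) * (lam ⟨0, by omega⟩ - 1 / d) := by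
  have hdR : (2 : ℝ) ≤ (d : ℝ) := by exact_mod_cast hd
  have hdpos : (0:ℝ) < (d : ℝ) := by linarith
  have hdne : (d : ℝ) ≠ 0 := ne_of_gt hdpos
  have hinv : 1 / (d : ℝ) * d = 1 := by field_simp
  set l0 := lam ⟨0, by omega⟩ with hl0
  have hl0pos : 0 < l0 := hpos _
  have hd1 : (d : ℝ) - 1 ≠ 0 := by linarith
  have hd2 : (0:ℝ) < (d : ℝ) ^ 2 - 2 := by nlinarith
  have hl1 : l0 < 1 := by
    have h := (lt_div_iff₀ hd2).mp hhigh
    nlinarith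
  have hx : 0 < l0 - 1 / d := by linarith
  set μ : ℝ := (1 - l0) / ((d : ℝ) - 1) with hμdef
  have hμlast : lam ⟨d - 1, by omega⟩ = μ := heqtail _ (by simp; omega)
  have hμpos : 0 < μ := hμlast ▸ hpos ⟨d - 1, by omega⟩
  have hDpos : 0 < (d : ℝ) ^ 2 * (l0 - 1 / d) + 2 * (1 - l0) := by
    have := mul_pos (pow_pos hdpos 2) hx
    linarith
  have hDne := ne_of_gt hDpos
  have hRval : (d : ℝ) - ((d : ℝ) ^ 2 - 2) * μ
      = ((d : ℝ) ^ 2 * (l0 - 1 / d) + 2 * (1 - l0)) / ((d : ℝ) - 1) := by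
    rw [hμdef]
    field_simp
    ring
  have hRpos : 0 < (d : ℝ) - ((d : ℝ) ^ 2 - 2) * μ := by
    rw [hRval]; exact div_pos hDpos (by linarith)
  have hRne : (d : ℝ) - ((d : ℝ) ^ 2 - 2) * μ ≠ 0 := ne_of_gt hRpos
  have part1 : ∀ j : Fin d, 1 ≤ (j : ℕ) → γ j = 0 := by
    intro j hj
    rw [hγ j, hμlast, heqtail j hj, div_self (ne_of_gt hμpos),
      div_self hRne]
    ring
  have part2 : p₁ = l0 * γ ⟨0, by omega⟩ := by
    rw [hp₁]
    apply Finset.sum_eq_single_of_mem _ (Finset.mem_univ _)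
    intro j _ hjne
    have : 1 ≤ (j : ℕ) := by
      rcases Nat.eq_zero_or_pos (j : ℕ) with h | h
      · exact absurd (Fin.ext h) hjne
      · exact h
    rw [part1 j this, mul_zero]
  have part3 : p₁ = (d : ℝ) ^ 2 * (l0 - 1 / d)
      / ((d : ℝ) ^ 2 * (l0 - 1 / d) + 2 * (1 - l0)) := by
    have hμR : μ / ((d:ℝ) - ((d:ℝ)^2-2)*μ)
        = (1 - l0) / ((d : ℝ) ^ 2 * (l0 - 1 / d) + 2 * (1 - l0)) := by
      rw [hRval, hμdef, div_div_div_cancel_right₀]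
      exact hd1
    have hstep : l0 * γ ⟨0, by omega⟩
        = l0 - (μ / ((d:ℝ) - ((d:ℝ)^2-2)*μ)) * ((d:ℝ) - ((d:ℝ)^2-2)*l0) := by
      rw [hγ, hμlast, ← hl0]
      field_simp
    have hDD : (d:ℝ)^2*(l0 - 1/d) + 2*(1 - l0) = ((d:ℝ)^2 - 2)*l0 + 2 - d := by
      field_simp
      ring
    have hNN : (d:ℝ)^2*(l0 - 1/d) = (d:ℝ)^2*l0 - d := by
      field_simp
    have hD'ne : ((d:ℝ)^2 - 2)*l0 + 2 - d ≠ 0 := hDD ▸ hDne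
    rw [part2, hstep, hμR, hDD, hNN, eq_div_iff hD'ne]
    rw [sub_mul, div_mul_eq_mul_div, div_mul_cancel₀ _ hD'ne]
    ring
  refine ⟨part1, part2, part3, ?_⟩
  rw [part3]
  have hbpos : (0:ℝ) < 2 * ((d : ℝ) - 1) / d := by
    apply div_pos (by linarith) hdpos
  have hbc : 2 * ((d : ℝ) - 1) / d ≤ (d : ℝ) ^ 2 * (l0 - 1 / d) + 2 * (1 - l0) := by
    rw [div_le_iff₀ hdpos]
    nlinarith [mul_pos hdpos hx, mul_pos (mul_pos hdpos hdpos) (mul_pos hdpos hx)]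
  calc (d : ℝ) ^ 2 * (l0 - 1 / d)
        / ((d : ℝ) ^ 2 * (l0 - 1 / d) + 2 * (1 - l0))
      ≤ (d : ℝ) ^ 2 * (l0 - 1 / d) / (2 * ((d : ℝ) - 1) / d) := by
        apply div_le_div_of_nonneg_left (by positivity) hbpos hbc
    _ = (d : ℝ) ^ 3 / (2 * ((d : ℝ) - 1)) * (l0 - 1 / d) := by
        field_simp
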